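/- arXiv:2212.02724 — 3 statements merged into one kernel-verified Lean document; each statement's English description precedes it below -/
import Mathlib

section
/- Let $W \in \mathbb{R}^{K\times K}$ be symmetric doubly stochastic with $\|XW - \bar{X}\|_F \le \lambda\|X-\bar{X}\|_F$ for all $X$ (where $\bar X$ averages columns), $0<\lambda<1$. Define $X_{1/2} = XW - \gamma A$ and $X^+ = X + \eta(X_{1/2} - X)$ with $0 < \eta \le 1$, $\gamma > 0$. Then $\|X^+ - \bar{X}^+\|_F^2 \le \big(1 - \tfrac{\eta(1-\lambda^2)}{2}\big)\|X - \bar{X}\|_F^2 + \tfrac{2\eta\gamma^2}{1-\lambda^2}\|A - \bar{A}\|_F^2$. -/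
open Finset Matrix

/-- Column-average matrix: every column replaced by the column average. -/
noncomputable def colAvg {d K : ℕ} (X : Matrix (Fin d) (Fin K) ℝ) : Matrix (Fin d) (Fin K) ℝ :=
  fun i _ => (1 / (K : ℝ)) * ∑ k, X i k

/-- Squared Frobenius norm. -/
def frobSq {d K : ℕ} (X : Matrix (Fin d) (Fin K) ℝ) : ℝ :=
  ∑ i, ∑ j, (X i j) ^ 2

private lemma young_sq (a u v : ℝ) (ha : 0 < a) :
    (u + v) ^ 2 ≤ (1 + a) * u ^ 2 + (1 + 1 / a) * v ^ 2 := by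
  have h : (1 + a) * u ^ 2 + (1 + 1 / a) * v ^ 2 - (u + v) ^ 2 = (a * u - v) ^ 2 / a := by
    field_simp; ring
  nlinarith [div_nonneg (sq_nonneg (a * u - v)) ha.le]

private lemma aux_factor (t D : ℝ) (ht : t < 1) :
    (1 + t / (2 * (1 - t))) * ((1 - t) * D) = (1 - t / 2) * D := by
  have h : (1:ℝ) - t ≠ 0 := by linarith
  field_simp
  ring

private lemma convex_sq (η d m : ℝ) (h0 : 0 ≤ η) (h1 : η ≤ 1) :
    ((1 - η) * d + η * m) ^ 2 ≤ (1 - η) * d ^ 2 + η * m ^ 2 := by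
  nlinarith [sq_nonneg (d - m), mul_nonneg h0 (sub_nonneg.mpr h1)]

/-- One-step consensus contraction for the mixed update
`X⁺ = X + η (XW - γA - X)`. -/
theorem stmt_6 (d K : ℕ) (hK : 1 ≤ K) (lam γ η : ℝ)
    (hlam0 : 0 < lam) (hlam1 : lam < 1) (hγ : 0 < γ) (hη0 : 0 < η) (hη1 : η ≤ 1)
    (W : Matrix (Fin K) (Fin K) ℝ) (hsym : W.IsHermitian)
    (hrow : ∀ i, ∑ j, W i j = 1) (hcol : ∀ j, ∑ i, W i j = 1)
    (hcontr : ∀ X : Matrix (Fin d) (Fin K) ℝ,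
      frobSq (X * W - colAvg X) ≤ lam ^ 2 * frobSq (X - colAvg X))
    (X A : Matrix (Fin d) (Fin K) ℝ) :
    frobSq ((X + η • (X * W - γ • A - X)) - colAvg (X + η • (X * W - γ • A - X)))
      ≤ (1 - η * (1 - lam ^ 2) / 2) * frobSq (X - colAvg X)
        + (2 * η * γ ^ 2 / (1 - lam ^ 2)) * frobSq (A - colAvg A) := by
  have h1lam : 0 < 1 - lam ^ 2 := by nlinarith
  set s : ℝ := η * (1 - lam ^ 2) with hs_def
  have hs0 : 0 < s := mul_pos hη0 h1lam
  have hs1 : s < 1 := by nlinarith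
  set a : ℝ := s / (2 * (1 - s)) with ha_def
  have ha : 0 < a := div_pos hs0 (by linarith)
  -- row sums of X * W
  have hXW : ∀ i, ∑ k, (X * W) i k = ∑ k, X i k := by
    intro i
    simp only [Matrix.mul_apply]
    rw [Finset.sum_comm]
    simp [← Finset.mul_sum, hrow]
  -- entrywise identity
  have hEntry : ∀ i j,
      ((X + η • (X * W - γ • A - X)) - colAvg (X + η • (X * W - γ • A - X))) i j
        = ((1 - η) * (X i j - colAvg X i j) + η * ((X * W) i j - colAvg X i j))
            + (-(η * γ)) * (A i j - colAvg A i j) := by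
    intro i j
    simp only [Matrix.sub_apply, Matrix.add_apply, Matrix.smul_apply, smul_eq_mul, colAvg]
    have hsum : ∑ k, (X i k + η * ((X * W) i k - γ * A i k - X i k))
        = (∑ k, X i k) + η * ((∑ k, X i k) - γ * (∑ k, A i k) - (∑ k, X i k)) := by
      rw [Finset.sum_add_distrib, ← Finset.mul_sum, Finset.sum_sub_distrib,
        Finset.sum_sub_distrib, ← Finset.mul_sum, hXW i]
    rw [hsum]
    ring
  -- pointwise inequality
  have hpt : ∀ i j,
      (((X + η • (X * W - γ • A - X)) - colAvg (X + η • (X * W - γ • A - X))) i j) ^ 2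
        ≤ (1 + a) * ((1 - η) * ((X - colAvg X) i j) ^ 2
              + η * (((X * W) - colAvg X) i j) ^ 2)
          + ((1 + 1 / a) * (η * γ) ^ 2) * ((A - colAvg A) i j) ^ 2 := by
    intro i j
    rw [hEntry i j]
    have h1 := young_sq a ((1 - η) * (X i j - colAvg X i j) + η * ((X * W) i j - colAvg X i j))
      ((-(η * γ)) * (A i j - colAvg A i j)) ha
    have h2 := convex_sq η (X i j - colAvg X i j) ((X * W) i j - colAvg X i j) hη0.le hη1
    have h3 : (0:ℝ) ≤ 1 + a := by linarith
    simp only [Matrix.sub_apply]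
    nlinarith [mul_le_mul_of_nonneg_left h2 h3]
  -- sum the pointwise inequality
  have hsumle : frobSq ((X + η • (X * W - γ • A - X)) - colAvg (X + η • (X * W - γ • A - X)))
      ≤ (1 + a) * ((1 - η) * frobSq (X - colAvg X) + η * frobSq ((X * W) - colAvg X))
        + ((1 + 1 / a) * (η * γ) ^ 2) * frobSq (A - colAvg A) := by
    unfold frobSq
    calc ∑ i, ∑ j, (((X + η • (X * W - γ • A - X))
            - colAvg (X + η • (X * W - γ • A - X))) i j) ^ 2
        ≤ ∑ i, ∑ j, ((1 + a) * ((1 - η) * ((X - colAvg X) i j) ^ 2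
              + η * (((X * W) - colAvg X) i j) ^ 2)
            + ((1 + 1 / a) * (η * γ) ^ 2) * ((A - colAvg A) i j) ^ 2) := by
          apply Finset.sum_le_sum
          intro i _
          apply Finset.sum_le_sum
          intro j _
          exact hpt i j
      _ = (1 + a) * ((1 - η) * (∑ i, ∑ j, ((X - colAvg X) i j) ^ 2)
              + η * (∑ i, ∑ j, (((X * W) - colAvg X) i j) ^ 2))
            + ((1 + 1 / a) * (η * γ) ^ 2) * (∑ i, ∑ j, ((A - colAvg A) i j) ^ 2) := by
          simp only [Finset.sum_add_distrib, ← Finset.mul_sum, mul_add]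
  have hM := hcontr X
  set DD := frobSq (X - colAvg X) with hDDdef
  set MM := frobSq ((X * W) - colAvg X) with hMMdef
  set BB := frobSq (A - colAvg A) with hBBdef
  have hDD0 : 0 ≤ DD := Finset.sum_nonneg fun i _ => Finset.sum_nonneg fun j _ => sq_nonneg _
  have hBB0 : 0 ≤ BB := Finset.sum_nonneg fun i _ => Finset.sum_nonneg fun j _ => sq_nonneg _
  refine hsumle.trans ?_
  have key1 : (1 + a) * ((1 - η) * DD + η * MM) ≤ (1 - s / 2) * DD := by
    have h1 : (1 - η) * DD + η * MM ≤ (1 - s) * DD := by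
      have : η * MM ≤ η * (lam ^ 2 * DD) := mul_le_mul_of_nonneg_left hM hη0.le
      nlinarith
    have h2 : (1 + a) * ((1 - η) * DD + η * MM) ≤ (1 + a) * ((1 - s) * DD) :=
      mul_le_mul_of_nonneg_left h1 (by linarith)
    have h3 : (1 + a) * ((1 - s) * DD) = (1 - s / 2) * DD := by
      rw [ha_def]; exact aux_factor s DD hs1
    linarith
  have key2 : ((1 + 1 / a) * (η * γ) ^ 2) * BB ≤ (2 * η * γ ^ 2 / (1 - lam ^ 2)) * BB := by
    apply mul_le_mul_of_nonneg_right _ hBB0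
    have h1a : 1 + 1 / a = (2 - s) / s := by
      rw [ha_def]
      field_simp
      ring
    rw [h1a, hs_def]
    rw [div_mul_eq_mul_div, div_le_div_iff₀ (by positivity) h1lam]
    have hfact : 0 ≤ η ^ 3 * γ ^ 2 * (1 - lam ^ 2) ^ 2 := by positivity
    nlinarith [hfact]
  have : η * (1 - lam ^ 2) / 2 = s / 2 := by rw [hs_def]
  rw [this]
  linarith
end

section
/- Let $g: \mathbb{R}^{d'} \to \mathbb{R}$ be $\mu$-strongly concave and $L$-smooth with maximizer $y^*$. Consider the update $y^+ = y + \gamma_2\eta\, u$ for a direction $u$ and step sizes $\gamma_2 \le \tfrac{1}{6L}$, $0 < \eta \le 1$. Then $\|y^+ - y^*\|^2 \le (1 - \tfrac{\eta\gamma_2\mu}{2})\|y - y^*\|^2 - \tfrac{3\gamma_2^2\eta}{4}\|u\|^2 + \tfrac{25\eta\gamma_2}{6\mu}\|\nabla g(y) - u\|^2$. -/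
/-!
Write `d = y - y*` and `G = ∇g y`. The descent lemma for the `L`-Lipschitz gradient, applied
at `y` with step `G / L` and compared with the maximum `g y*`, gives `‖G‖² / (2L) ≤ g y* - g y`;
together with strong concavity between `y` and `y*` this yields
`⟪G, d⟫ ≤ -‖G‖² / (2L) - μ/2 ‖d‖²`. Replacing `G` by the inexact direction `u` costs, by
Young's inequality and `‖u‖² ≤ 2‖G‖² + 2‖G - u‖²`, only a multiple of `‖G - u‖²`, and expanding
`‖d + γ₂η u‖²` finishes the proof, the step-size condition `γ₂ ≤ 1/(6L)` absorbing the
`(γ₂η)²‖u‖²` term.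
-/

open RealInnerProductSpace

section

variable {F : Type*} [NormedAddCommGroup F] [InnerProductSpace ℝ F]

theorem inner_le_of_inner_le_of_perturbation {d G u : F} {μ L : ℝ} (hμ : 0 < μ) (hμL : μ ≤ L)
    (hG : ⟪G, d⟫ ≤ -(‖G‖ ^ 2 / (2 * L)) - μ / 2 * ‖d‖ ^ 2) :
    ⟪u, d⟫ ≤ -(μ / 4 * ‖d‖ ^ 2) - ‖u‖ ^ 2 / (4 * L) + 3 / (2 * μ) * ‖G - u‖ ^ 2 := by
  have hL : 0 < L := hμ.trans_le hμL
  have hsplit : ⟪u, d⟫ = ⟪G, d⟫ - ⟪G - u, d⟫ := by rw [inner_sub_left, sub_sub_cancel]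
  have hyoung : -⟪G - u, d⟫ ≤ μ / 4 * ‖d‖ ^ 2 + ‖G - u‖ ^ 2 / μ := by
    have hcs : -⟪G - u, d⟫ ≤ ‖G - u‖ * ‖d‖ := (neg_le_abs _).trans (abs_real_inner_le_norm _ _)
    have hsq : ‖G - u‖ * ‖d‖ ≤ μ / 4 * ‖d‖ ^ 2 + ‖G - u‖ ^ 2 / μ := by
      rw [← sub_nonneg]
      have hsq_eq : μ / 4 * ‖d‖ ^ 2 + ‖G - u‖ ^ 2 / μ - ‖G - u‖ * ‖d‖
          = (μ / 2 * ‖d‖ - ‖G - u‖) ^ 2 / μ := by field_simp; ring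
      rw [hsq_eq]; positivity
    linarith
  have hu : ‖u‖ ^ 2 ≤ 2 * (‖G‖ ^ 2 + ‖G - u‖ ^ 2) := by
    have htri : ‖u‖ ≤ ‖G‖ + ‖G - u‖ := by simpa using norm_sub_le G (G - u)
    exact (pow_le_pow_left₀ (norm_nonneg u) htri 2).trans add_sq_le
  have hLμ : ‖G - u‖ ^ 2 / (2 * L) ≤ ‖G - u‖ ^ 2 / (2 * μ) := by gcongr
  have hGu : ‖u‖ ^ 2 / (4 * L) ≤ ‖G‖ ^ 2 / (2 * L) + ‖G - u‖ ^ 2 / (2 * L) :=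
    calc ‖u‖ ^ 2 / (4 * L) ≤ 2 * (‖G‖ ^ 2 + ‖G - u‖ ^ 2) / (4 * L) := by gcongr
      _ = ‖G‖ ^ 2 / (2 * L) + ‖G - u‖ ^ 2 / (2 * L) := by field_simp; ring
  have hcoef : 3 / (2 * μ) * ‖G - u‖ ^ 2 = ‖G - u‖ ^ 2 / μ + ‖G - u‖ ^ 2 / (2 * μ) := by
    field_simp; ring
  linarith

theorem norm_add_smul_sq_le_of_inner_le {d u : F} {e μ L γ η : ℝ} (hμ : 0 < μ) (hμL : μ ≤ L)
    (hγ : 0 < γ) (hγL : γ ≤ 1 / (6 * L)) (hη0 : 0 < η) (hη1 : η ≤ 1)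
    (hinner : ⟪u, d⟫ ≤ -(μ / 4 * ‖d‖ ^ 2) - ‖u‖ ^ 2 / (4 * L) + 3 / (2 * μ) * e) (he : 0 ≤ e) :
    ‖d + (γ * η) • u‖ ^ 2
      ≤ (1 - η * γ * μ / 2) * ‖d‖ ^ 2 - (3 * γ ^ 2 * η / 4) * ‖u‖ ^ 2
        + (25 * η * γ / (6 * μ)) * e := by
  have hL : 0 < L := hμ.trans_le hμL
  have hexp : ‖d + (γ * η) • u‖ ^ 2 = ‖d‖ ^ 2 + 2 * (γ * η) * ⟪u, d⟫ + (γ * η) ^ 2 * ‖u‖ ^ 2 := by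
    rw [norm_add_sq_real, inner_smul_right, norm_smul, mul_pow, Real.norm_eq_abs, sq_abs,
      real_inner_comm]
    ring
  have h3γ : 3 * γ ≤ 1 / (2 * L) := by
    rw [le_div_iff₀ (by positivity)]
    rw [le_div_iff₀ (by positivity)] at hγL
    linarith
  have hstep : 2 * (γ * η) * ⟪u, d⟫
      ≤ -(η * γ * μ / 2 * ‖d‖ ^ 2) - 3 * γ ^ 2 * η * ‖u‖ ^ 2 + 3 * η * γ / μ * e := by
    have hmul := mul_le_mul_of_nonneg_left hinner (by positivity : 0 ≤ 2 * (γ * η))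
    have hLu := mul_le_mul_of_nonneg_right h3γ (by positivity : 0 ≤ γ * η * ‖u‖ ^ 2)
    have hexpand : 2 * (γ * η) * (-(μ / 4 * ‖d‖ ^ 2) - ‖u‖ ^ 2 / (4 * L) + 3 / (2 * μ) * e)
        = -(η * γ * μ / 2 * ‖d‖ ^ 2) - 1 / (2 * L) * (γ * η * ‖u‖ ^ 2) + 3 * η * γ / μ * e := by
      field_simp; ring
    linarith
  have hηη : (γ * η) ^ 2 ≤ γ ^ 2 * η := by
    rw [mul_pow]; gcongr; nlinarith
  have he' : 3 * η * γ / μ * e ≤ 25 * η * γ / (6 * μ) * e := by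
    have hcoef : 25 * η * γ / (6 * μ) * e = 3 * η * γ / μ * e + 7 * η * γ / (6 * μ) * e := by
      field_simp; ring
    rw [hcoef]; linarith [show 0 ≤ 7 * η * γ / (6 * μ) * e by positivity]
  have hu2 := mul_le_mul_of_nonneg_right hηη (sq_nonneg ‖u‖)
  have hu2' : 0 ≤ γ ^ 2 * η * ‖u‖ ^ 2 := by positivity
  rw [hexp]
  linarith

variable [CompleteSpace F]

theorem le_image_add_of_lipschitz_gradient {g : F → ℝ} {gradg : F → F} {L : ℝ}
    (hgrad : ∀ y, HasGradientAt g (gradg y) y)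
    (hlip : ∀ y₁ y₂, ‖gradg y₁ - gradg y₂‖ ≤ L * ‖y₁ - y₂‖) (y v : F) :
    g y + ⟪gradg y, v⟫ - L / 2 * ‖v‖ ^ 2 ≤ g (y + v) := by
  -- `φ t = g (y + t v) - t ⟪∇g y, v⟫ + L t² ‖v‖² / 2` is nondecreasing on `t ≥ 0`.
  set φ : ℝ → ℝ := fun t ↦ g (y + t • v) - t * ⟪gradg y, v⟫ + L / 2 * t ^ 2 * ‖v‖ ^ 2
  have hφ : ∀ t, HasDerivAt φ (⟪gradg (y + t • v) - gradg y, v⟫ + L * t * ‖v‖ ^ 2) t := by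
    intro t
    have hline : HasDerivAt (fun s : ℝ ↦ y + s • v) v t := by
      simpa using ((hasDerivAt_id t).smul_const v).const_add y
    have hg := (hgrad (y + t • v)).hasFDerivAt.comp_hasDerivAt t hline
    have := ((hg.sub ((hasDerivAt_id t).mul_const ⟪gradg y, v⟫)).add
      (((hasDerivAt_pow 2 t).const_mul (L / 2)).mul_const (‖v‖ ^ 2)))
    refine this.congr_deriv ?_
    simp only [InnerProductSpace.toDual_apply_apply, inner_sub_left]
    ring
  have hmono : MonotoneOn φ (Set.Ici 0) := by
    refine monotoneOn_of_hasDerivWithinAt_nonneg (convex_Ici 0)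
      (fun t _ ↦ (hφ t).continuousAt.continuousWithinAt) (fun t _ ↦ (hφ t).hasDerivWithinAt) ?_
    intro t ht
    rw [interior_Ici, Set.mem_Ioi] at ht
    have hdiff : ‖gradg (y + t • v) - gradg y‖ ≤ L * (t * ‖v‖) := by
      simpa [norm_smul, abs_of_pos ht] using hlip (y + t • v) y
    have hcs := neg_le_of_abs_le (abs_real_inner_le_norm (gradg (y + t • v) - gradg y) v)
    nlinarith [mul_le_mul_of_nonneg_right hdiff (norm_nonneg v)]
  have h01 : φ 0 ≤ φ 1 := hmono Set.self_mem_Ici (Set.mem_Ici.mpr zero_le_one) zero_le_one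
  have hφ0 : φ 0 = g y := by simp [φ]
  have hφ1 : φ 1 = g (y + v) - ⟪gradg y, v⟫ + L / 2 * ‖v‖ ^ 2 := by simp [φ]
  linarith

theorem sq_norm_gradient_le_of_forall_le {g : F → ℝ} {gradg : F → F} {L : ℝ} (hL : 0 < L)
    (hgrad : ∀ y, HasGradientAt g (gradg y) y)
    (hlip : ∀ y₁ y₂, ‖gradg y₁ - gradg y₂‖ ≤ L * ‖y₁ - y₂‖)
    {ystar : F} (hmax : ∀ y, g y ≤ g ystar) (y : F) :
    ‖gradg y‖ ^ 2 / (2 * L) ≤ g ystar - g y := by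
  have hstep := le_image_add_of_lipschitz_gradient hgrad hlip y (L⁻¹ • gradg y)
  rw [inner_smul_right, real_inner_self_eq_norm_sq, norm_smul, mul_pow, Real.norm_eq_abs,
    sq_abs] at hstep
  have hcoef : L⁻¹ * ‖gradg y‖ ^ 2 - L / 2 * (L⁻¹ ^ 2 * ‖gradg y‖ ^ 2)
      = ‖gradg y‖ ^ 2 / (2 * L) := by
    field_simp; ring
  linarith [hmax (y + L⁻¹ • gradg y)]

theorem inner_gradient_sub_le_of_forall_le {g : F → ℝ} {gradg : F → F} {μ L : ℝ} (hL : 0 < L)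
    (hgrad : ∀ y, HasGradientAt g (gradg y) y)
    (hlip : ∀ y₁ y₂, ‖gradg y₁ - gradg y₂‖ ≤ L * ‖y₁ - y₂‖)
    (hsc : ∀ y₁ y₂, g y₁ ≤ g y₂ + ⟪gradg y₂, y₁ - y₂⟫ - μ / 2 * ‖y₁ - y₂‖ ^ 2)
    {ystar : F} (hmax : ∀ y, g y ≤ g ystar) (y : F) :
    ⟪gradg y, y - ystar⟫ ≤ -(‖gradg y‖ ^ 2 / (2 * L)) - μ / 2 * ‖y - ystar‖ ^ 2 := by
  have hconc := hsc ystar y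
  rw [norm_sub_rev, ← neg_sub y ystar, inner_neg_right] at hconc
  linarith [sq_norm_gradient_le_of_forall_le hL hgrad hlip hmax y]

end

/-- One-step inexact gradient ascent contraction for a strongly concave smooth
function. -/
theorem stmt_10 {F : Type*} [NormedAddCommGroup F] [InnerProductSpace ℝ F]
    [CompleteSpace F]
    (g : F → ℝ) (gradg : F → F) (μ L γ₂ η : ℝ)
    (hμ : 0 < μ) (hμL : μ ≤ L)
    (hgrad : ∀ y, HasGradientAt g (gradg y) y)
    (hlip : ∀ y₁ y₂, ‖gradg y₁ - gradg y₂‖ ≤ L * ‖y₁ - y₂‖)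
    (hsc : ∀ y₁ y₂, g y₁ ≤ g y₂ + ⟪gradg y₂, y₁ - y₂⟫ - μ / 2 * ‖y₁ - y₂‖ ^ 2)
    (ystar : F) (hmax : ∀ y, g y ≤ g ystar)
    (hγ : 0 < γ₂) (hγL : γ₂ ≤ 1 / (6 * L)) (hη0 : 0 < η) (hη1 : η ≤ 1)
    (y u : F) :
    ‖(y + (γ₂ * η) • u) - ystar‖ ^ 2
      ≤ (1 - η * γ₂ * μ / 2) * ‖y - ystar‖ ^ 2
        - (3 * γ₂ ^ 2 * η / 4) * ‖u‖ ^ 2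
        + (25 * η * γ₂ / (6 * μ)) * ‖gradg y - u‖ ^ 2 := by
  have hG := inner_gradient_sub_le_of_forall_le (hμ.trans_le hμL) hgrad hlip hsc hmax y
  rw [add_sub_right_comm]
  exact norm_add_smul_sq_le_of_inner_le hμ hμL hγ hγL hη0 hη1
    (inner_le_of_inner_le_of_perturbation hμ hμL hG) (sq_nonneg _)
end

section
/- Let $f(x,y)$ be $L$-smooth and $\mu$-strongly concave in $y$, and define $\Phi(x) = \max_y f(x,y) = f(x, y^*(x))$. Then $\Phi$ is $L_\Phi$-smooth with $L_\Phi = 2\kappa L$ where $\kappa = L/\mu \ge 1$, and $\nabla\Phi(x) = \nabla_x f(x, y^*(x))$ (Danskin's theorem for strongly concave inner problems). -/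
open RealInnerProductSpace

/-- Danskin-type result: smoothness of `Φ(x) = max_y f(x,y)` with modulus
`L_Φ = 2κL`, `κ = L/μ`, and `∇Φ(x) = ∇ₓ f(x, y*(x))`. -/
theorem stmt_12 {E F : Type*} [NormedAddCommGroup E] [InnerProductSpace ℝ E]
    [CompleteSpace E] [NormedAddCommGroup F] [InnerProductSpace ℝ F]
    [CompleteSpace F]
    (f : E → F → ℝ) (gx : E → F → E) (gy : E → F → F) (μ L : ℝ)
    (hμ : 0 < μ) (hμL : μ ≤ L)
    (hgradx : ∀ x y, HasGradientAt (fun x' => f x' y) (gx x y) x)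
    (hgrady : ∀ x y, HasGradientAt (f x) (gy x y) y)
    (hsmooth : ∀ (x₁ x₂ : E) (y₁ y₂ : F),
      ‖gx x₁ y₁ - gx x₂ y₂‖ ^ 2 + ‖gy x₁ y₁ - gy x₂ y₂‖ ^ 2
        ≤ L ^ 2 * (‖x₁ - x₂‖ ^ 2 + ‖y₁ - y₂‖ ^ 2))
    (hsc : ∀ (x : E) (y₁ y₂ : F),
      f x y₁ ≤ f x y₂ + ⟪gy x y₂, y₁ - y₂⟫ - μ / 2 * ‖y₁ - y₂‖ ^ 2)
    (ystar : E → F) (hmax : ∀ x y, f x y ≤ f x (ystar x)) :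
    (∀ x, HasGradientAt (fun x' => f x' (ystar x')) (gx x (ystar x)) x) ∧
    (∀ x₁ x₂ : E,
      ‖gx x₁ (ystar x₁) - gx x₂ (ystar x₂)‖ ≤ 2 * (L / μ) * L * ‖x₁ - x₂‖) := by
  have hL : 0 < L := lt_of_lt_of_le hμ hμL
  -- gradient in y vanishes at the maximizer
  have hzero : ∀ x, gy x (ystar x) = 0 := by
    intro x
    have hloc : IsLocalMax (f x) (ystar x) := Filter.Eventually.of_forall (hmax x)
    have h0 : (InnerProductSpace.toDual ℝ F) (gy x (ystar x)) = 0 :=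
      hloc.hasFDerivAt_eq_zero (hgrady x (ystar x)).hasFDerivAt
    exact (InnerProductSpace.toDual ℝ F).injective (by simpa using h0)
  -- cross-Lipschitz bound for gy in x
  have hgylip : ∀ (x₁ x₂ : E) (y : F), ‖gy x₁ y - gy x₂ y‖ ≤ L * ‖x₁ - x₂‖ := by
    intro x₁ x₂ y
    have h := hsmooth x₁ x₂ y y
    simp only [sub_self, norm_zero] at h
    have h2 : ‖gy x₁ y - gy x₂ y‖ ^ 2 ≤ (L * ‖x₁ - x₂‖) ^ 2 := by
      nlinarith [sq_nonneg ‖gx x₁ y - gx x₂ y‖]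
    exact (pow_le_pow_iff_left₀ (norm_nonneg _) (by positivity) two_ne_zero).mp h2
  -- strong monotonicity of -gy
  have hmono : ∀ (x : E) (y₁ y₂ : F),
      μ * ‖y₁ - y₂‖ ^ 2 ≤ ⟪gy x y₂ - gy x y₁, y₁ - y₂⟫ := by
    intro x y₁ y₂
    have h1 := hsc x y₁ y₂
    have h2 := hsc x y₂ y₁
    rw [show y₂ - y₁ = -(y₁ - y₂) by abel, inner_neg_right, norm_neg] at h2
    rw [inner_sub_left]
    linarith
  -- Lipschitz continuity of ystar
  have hylip : ∀ x₁ x₂ : E, ‖ystar x₁ - ystar x₂‖ ≤ L / μ * ‖x₁ - x₂‖ := by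
    intro x₁ x₂
    have h := hmono x₂ (ystar x₁) (ystar x₂)
    rw [hzero x₂, zero_sub, inner_neg_left] at h
    have hkey : μ * ‖ystar x₁ - ystar x₂‖ ^ 2
        ≤ ⟪gy x₁ (ystar x₁) - gy x₂ (ystar x₁), ystar x₁ - ystar x₂⟫ := by
      rw [hzero x₁, zero_sub, inner_neg_left]; exact h
    have hcs : ⟪gy x₁ (ystar x₁) - gy x₂ (ystar x₁), ystar x₁ - ystar x₂⟫
        ≤ L * ‖x₁ - x₂‖ * ‖ystar x₁ - ystar x₂‖ :=
      le_trans (real_inner_le_norm _ _)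
        (mul_le_mul_of_nonneg_right (hgylip x₁ x₂ _) (norm_nonneg _))
    rcases eq_or_lt_of_le (norm_nonneg (ystar x₁ - ystar x₂)) with hn | hn
    · rw [← hn]; positivity
    · have : μ * ‖ystar x₁ - ystar x₂‖ ≤ L * ‖x₁ - x₂‖ := by
        have := le_trans hkey hcs
        nlinarith
      rw [div_mul_eq_mul_div, le_div_iff₀ hμ]; linarith
  constructor
  · -- the gradient statement
    intro x
    set g := gx x (ystar x) with hg
    rw [hasGradientAt_iff_hasFDerivAt]
    have hbase : HasFDerivAt (fun x' => f x' (ystar x))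
        ((InnerProductSpace.toDual ℝ E) g) x := (hgradx x (ystar x)).hasFDerivAt
    rw [hasFDerivAt_iff_isLittleO_nhds_zero] at hbase ⊢
    set C := L * (L / μ) with hC
    have hCpos : 0 < C := by positivity
    -- sandwich bound
    have hsand : ∀ x' : E, f x' (ystar x) ≤ f x' (ystar x') ∧
        f x' (ystar x') ≤ f x' (ystar x) + C * ‖x' - x‖ ^ 2 := by
      intro x'
      refine ⟨hmax x' (ystar x), ?_⟩
      have h1 := hsc x' (ystar x') (ystar x)
      have h2 : ⟪gy x' (ystar x), ystar x' - ystar x⟫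
          ≤ (L * ‖x' - x‖) * (L / μ * ‖x' - x‖) := by
        refine le_trans (real_inner_le_norm _ _) ?_
        have hgy : ‖gy x' (ystar x)‖ ≤ L * ‖x' - x‖ := by
          have := hgylip x' x (ystar x)
          rwa [hzero x, sub_zero] at this
        exact mul_le_mul hgy (hylip x' x) (norm_nonneg _) (by positivity)
      have hμn : 0 ≤ μ / 2 * ‖ystar x' - ystar x‖ ^ 2 := by positivity
      have : f x' (ystar x') ≤ f x' (ystar x) + (L * ‖x' - x‖) * (L / μ * ‖x' - x‖) := by
        linarith
      calc f x' (ystar x') ≤ f x' (ystar x) + (L * ‖x' - x‖) * (L / μ * ‖x' - x‖) := this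
        _ = f x' (ystar x) + C * ‖x' - x‖ ^ 2 := by ring
    -- the error term is o(‖h‖)
    have herr : (fun h : E => f (x + h) (ystar (x + h)) - f (x + h) (ystar x))
        =o[nhds 0] (fun h : E => h) := by
      rw [Asymptotics.isLittleO_iff]
      intro c hc
      have hev : ∀ᶠ h : E in nhds 0, ‖h‖ < c / C := by
        have : Filter.Tendsto (fun h : E => ‖h‖) (nhds 0) (nhds 0) := by
          simpa using (continuous_norm.tendsto (0 : E))
        exact this.eventually_lt_const (by positivity)
      filter_upwards [hev] with h hh
      have hs := hsand (x + h)
      have hx : x + h - x = h := by abel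
      rw [hx] at hs
      have habs : |f (x + h) (ystar (x + h)) - f (x + h) (ystar x)| ≤ C * ‖h‖ ^ 2 := by
        rw [abs_le]
        constructor
        · nlinarith [hs.1, hCpos.le, sq_nonneg ‖h‖]
        · linarith [hs.2]
      calc ‖f (x + h) (ystar (x + h)) - f (x + h) (ystar x)‖ = |_| := rfl
        _ ≤ C * ‖h‖ ^ 2 := habs
        _ = (C * ‖h‖) * ‖h‖ := by ring
        _ ≤ c * ‖h‖ := by
            apply mul_le_mul_of_nonneg_right _ (norm_nonneg _)
            have := (lt_div_iff₀ hCpos).mp hh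
            linarith
    have := hbase.add herr
    refine this.congr_left fun h => ?_
    beta_reduce
    ring
  · -- the Lipschitz statement
    intro x₁ x₂
    have h := hsmooth x₁ x₂ (ystar x₁) (ystar x₂)
    have hy := hylip x₁ x₂
    have hκ : (1 : ℝ) ≤ L / μ := (one_le_div hμ).mpr hμL
    have hy2 : ‖ystar x₁ - ystar x₂‖ ^ 2 ≤ (L / μ * ‖x₁ - x₂‖) ^ 2 :=
      pow_le_pow_left₀ (norm_nonneg _) hy 2
    have h2 : ‖gx x₁ (ystar x₁) - gx x₂ (ystar x₂)‖ ^ 2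
        ≤ (2 * (L / μ) * L * ‖x₁ - x₂‖) ^ 2 := by
      have hκ2 : (1 : ℝ) ≤ (L / μ) ^ 2 := by nlinarith
      have h3 : L ^ 2 * ‖ystar x₁ - ystar x₂‖ ^ 2 ≤ L ^ 2 * (L / μ * ‖x₁ - x₂‖) ^ 2 :=
        mul_le_mul_of_nonneg_left hy2 (sq_nonneg L)
      have h4 : 0 ≤ (L * ‖x₁ - x₂‖) ^ 2 * ((L / μ) ^ 2 - 1) :=
        mul_nonneg (sq_nonneg _) (by linarith)
      nlinarith [h, h3, h4, sq_nonneg ‖gy x₁ (ystar x₁) - gy x₂ (ystar x₂)‖,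
        sq_nonneg (L / μ * (L * ‖x₁ - x₂‖))]
    exact (pow_le_pow_iff_left₀ (norm_nonneg _) (by positivity) two_ne_zero).mp h2
end
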